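/- In the three-stage route-fixing algorithm for the security third model, every AS whose route is fixed during the Fix-Customer-Routes (FCR) phase stabilizes, under asynchronous S*BGP convergence, to exactly the route computed by the algorithm. (Proved by induction on FCR iterations: the AS fixed at iteration 1 is a direct provider of d with a one-hop customer route, and each subsequently fixed AS's next hops were fixed at earlier iterations.) -/

import Mathlib

open scoped Classical

namespace SBGP

/-- Business relationship of a neighbor, from the point of view of a given AS. -/
inductive Rel
  | customer
  | peer
  | provider
deriving DecidableEq

/-- The three positions at which the secure-route preference step can be inserted. -/
inductive SecModel
  | first
  | second
  | third
deriving DecidableEq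

/-- An AS-level graph with business relationships on its edges. -/
structure ASGraph (V : Type*) where
  adj : V → V → Bool
  /-- `rel u v` is the relationship of `v` as seen from `u`
      (`customer` means `v` is `u`'s customer, etc.). -/
  rel : V → V → Rel
  adj_symm : ∀ u v, adj u v = adj v u
  adj_irrefl : ∀ v, adj v v = false
  rel_consistent : ∀ u v, adj u v = true →
    ((rel u v = Rel.customer ↔ rel v u = Rel.provider) ∧
     (rel u v = Rel.peer ↔ rel v u = Rel.peer))

variable {V : Type*}

def lpRank : Rel → ℕ
  | Rel.customer => 0
  | Rel.peer => 1
  | Rel.provider => 2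

/-- The relationship of the next hop of a route (`none` for trivial routes). -/
def nextRel (G : ASGraph V) : List V → Option Rel
  | a :: b :: _ => some (G.rel a b)
  | _ => none

/-- Local-preference value of a route (customer < peer < provider). -/
def lpVal (G : ASGraph V) : List V → ℕ
  | a :: b :: _ => lpRank (G.rel a b)
  | _ => 0

/-- `R` is a (nonempty) path in `G`. -/
def IsPath (G : ASGraph V) : List V → Prop
  | [] => False
  | [_] => True
  | a :: b :: rest => G.adj a b = true ∧ IsPath G (b :: rest)

/-- `R` is a simple route in `G` ending at `d`. -/
def IsRouteTo (G : ASGraph V) (R : List V) (d : V) : Prop :=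
  R.Nodup ∧ IsPath G R ∧ R.getLast? = some d

/-- The export rule (Ex) along a route `a :: b :: c :: …`: each internal AS `b`
announces its route (with next hop `c`) to `a` only if that route is a customer
route of `b`, or `a` is `b`'s customer. -/
def ExportOK (G : ASGraph V) : List V → Prop
  | a :: b :: c :: rest =>
      (G.rel b c = Rel.customer ∨ G.rel b a = Rel.customer) ∧
      ExportOK G (b :: c :: rest)
  | _ => True

/-- A route is secure iff every AS on it has deployed S*BGP and it does not
contain the attacker (the bogus route is insecure even if the attacker is in `S`). -/
def SecureRoute (S : Finset V) (m : Option V) (R : List V) : Prop :=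
  (∀ v ∈ R, v ∈ S) ∧ (∀ m', m = some m' → m' ∉ R)

/-- A legitimate route: ends at the destination `d` and avoids the attacker. -/
def LegitRoute (m : Option V) (d : V) (R : List V) : Prop :=
  R.getLast? = some d ∧ ∀ m', m = some m' → m' ∉ R

/-- Perceivable routes at `s` for destination `d` when the (optional) attacker `m`
announces the bogus path "m,d": either a genuine export-compliant route to `d`
avoiding `m`, or an export-compliant route to `m` extended by `m`'s claimed
(possibly nonexistent) edge to `d`. -/
def Perceivable (G : ASGraph V) (m : Option V) (d : V) (s : V) (R : List V) : Prop :=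
  R.head? = some s ∧
  ((IsRouteTo G R d ∧ ExportOK G R ∧ ∀ m', m = some m' → m' ∉ R) ∨
   (∃ m' R', m = some m' ∧ R = R' ++ [d] ∧ IsRouteTo G R' m' ∧ d ∉ R' ∧ ExportOK G R'))

/-- The rank of a route (smaller is better), encoding lexicographically the
ranking steps of the given security model: LP (customer > peer > provider),
SP (shorter > longer) and SecP (secure > insecure), in the order determined by
the model.  All components are `< Fintype.card V + 2`, so the encoding is
faithful on simple routes. -/
noncomputable def rankNat [Fintype V] (G : ASGraph V) (S : Finset V) (m : Option V)
    (mdl : SecModel) (R : List V) : ℕ :=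
  let B := Fintype.card V + 2
  let lp := lpVal G R
  let len := R.length
  let sec : ℕ := if SecureRoute S m R then 0 else 1
  match mdl with
  | SecModel.first => sec * B * B + lp * B + len
  | SecModel.second => lp * B * B + sec * B + len
  | SecModel.third => lp * B * B + len * B + sec

/-- `n` exports the route `R` (its currently selected route) to neighbor `s`:
always if `R` is a customer route of `n` or `n` originates `R`; otherwise only
if `s` is `n`'s customer. -/
def exportsTo (G : ASGraph V) (n s : V) : List V → Prop
  | _ :: c :: _ => G.rel n c = Rel.customer ∨ G.rel n s = Rel.customer
  | _ => True

/-- Routes available to `s` given the current selections `σ` of all ASes: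
routes exported by neighbors (with BGP loop detection), together with the
attacker's bogus announcement "m,d" to each of its neighbors. -/
def Avail (G : ASGraph V) (m : Option V) (d : V) (σ : V → List V) (s : V)
    (R : List V) : Prop :=
  (∃ n, G.adj s n = true ∧ (∀ m', m = some m' → n ≠ m') ∧ σ n ≠ [] ∧
      (σ n).head? = some n ∧ s ∉ σ n ∧ exportsTo G n s (σ n) ∧ R = s :: σ n) ∨
  (∃ m', m = some m' ∧ G.adj s m' = true ∧ s ≠ d ∧ R = [s, m', d])

/-- A stable routing state for destination `d`, secure deployment `S`,
attacker `m`, security model `mdl` and tiebreak `tb`: every AS (other than the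
destination and the attacker) selects the best available route, where ties in
rank are broken by the strict tiebreak `tb`. -/
def Stable [Fintype V] (G : ASGraph V) (tb : V → List V → ℕ) (S : Finset V)
    (m : Option V) (d : V) (mdl : SecModel) (σ : V → List V) : Prop :=
  σ d = [d] ∧
  (∀ m', m = some m' → σ m' = []) ∧
  ∀ s, s ≠ d → (∀ m', m = some m' → s ≠ m') →
    ((σ s = [] ∧ ∀ R, ¬ Avail G m d σ s R) ∨
     (Avail G m d σ s (σ s) ∧
      ∀ R, Avail G m d σ s R → R ≠ σ s →
        rankNat G S m mdl (σ s) < rankNat G S m mdl R ∨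
        (rankNat G S m mdl (σ s) = rankNat G S m mdl R ∧ tb s (σ s) < tb s R)))

/-- `s` is happy: it selects a legitimate route to `d`, avoiding the attacker. -/
def Happy (m : Option V) (d : V) (σ : V → List V) (s : V) : Prop :=
  σ s ≠ [] ∧ (σ s).getLast? = some d ∧ ∀ m', m = some m' → m' ∉ σ s

/-- The set of most-preferred perceivable routes of `s` (before the tiebreak step). -/
def BPR [Fintype V] (G : ASGraph V) (S : Finset V) (m : Option V) (d : V)
    (mdl : SecModel) (s : V) (R : List V) : Prop :=
  Perceivable G m d s R ∧
  ∀ R', Perceivable G m d s R' → rankNat G S m mdl R ≤ rankNat G S m mdl R'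

/-- The number of happy source ASes (sources other than `m` and `d`). -/
noncomputable def happyCount [Fintype V] [DecidableEq V] (m d : V)
    (σ : V → List V) : ℕ :=
  (Finset.univ.filter fun s => s ≠ m ∧ s ≠ d ∧ Happy (some m) d σ s).card

/-- The customer-provider hierarchy is acyclic. -/
def Hierarchy (G : ASGraph V) : Prop :=
  ∃ h : V → ℕ, ∀ u v, G.adj u v = true → G.rel u v = Rel.customer → h v < h u

/-- The tiebreak of every AS is deterministic (injective on routes). -/
def InjTB (tb : V → List V → ℕ) : Prop :=
  ∀ s, Function.Injective (tb s)

end SBGP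
namespace SBGP

/-- A route is consistent with the partial fixing `Fix`: whenever an AS `u`
whose route has already been fixed appears on the route, the suffix of the
route at `u` equals `u`'s fixed route. -/
def ConsistentWith {V : Type*} (Fix : V → List V → Prop) (R : List V) : Prop :=
  ∀ (A : List V) (u : V) (Q : List V), R = A ++ u :: Q →
    ∀ Q', Fix u Q' → Q' = u :: Q

/-- The set of (AS, route) pairs fixed within the first `r` iterations of the
Fix-Customer-Routes (FCR) phase of the route-fixing algorithm for the security
third model.  Stage `0` fixes the two BFS roots: the destination `d` (with the
empty route `[d]`, path length 0) and the attacker (with its bogus claimed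
route `[m, d]`, path length 1).  At each subsequent stage an AS may be fixed to
a customer route whose next hop was fixed earlier and which is best (up to the
tiebreak) among its perceivable routes consistent with the earlier fixes. -/
def FCRStage {V : Type*} [Fintype V] (G : ASGraph V) (tb : V → List V → ℕ)
    (S : Finset V) (m : Option V) (d : V) : ℕ → V → List V → Prop
  | 0, v, R => (v = d ∧ R = [d]) ∨ (∃ m', m = some m' ∧ v = m' ∧ R = [m', d])
  | r + 1, v, R =>
      FCRStage G tb S m d r v R ∨
      (Perceivable G m d v R ∧
       nextRel G R = some Rel.customer ∧
       (∃ u Q, R = v :: u :: Q ∧ FCRStage G tb S m d r u (u :: Q)) ∧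
       ConsistentWith (FCRStage G tb S m d r) R ∧
       (∀ R', Perceivable G m d v R' → ConsistentWith (FCRStage G tb S m d r) R' →
          rankNat G S m SecModel.third R ≤ rankNat G S m SecModel.third R' ∧
          (rankNat G S m SecModel.third R = rankNat G S m SecModel.third R' →
            R' ≠ R → tb v R < tb v R')))

/-! Induction on the FCR stage. The route `R = v :: u :: Q` fixed for `v` is available to `v` in the
stable outcome, because its next hop `u` was fixed earlier and hence already selects `u :: Q` (or
is the attacker announcing `[m, d]`). Conversely the selected route `σ v` is perceivable and, since
suffixes of selected routes are selected, consistent with all earlier fixes. So each of the two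
routes is optimal among a set containing the other, and the strict tiebreak forces `σ v = R`. -/

section Routes

variable {V : Type*} {G : ASGraph V} {m d : V}

lemma _root_.List.eq_singleton_of_head?_of_getLast? {l : List V} {a : V} (hhead : l.head? = some a)
    (hlast : l.getLast? = some a) (hnd : l.Nodup) : l = [a] := by
  match l, hhead with
  | [_], rfl => rfl
  | a :: b :: t, rfl =>
    rw [List.getLast?_cons_cons] at hlast
    exact absurd (List.mem_of_mem_getLast? hlast) (List.nodup_cons.mp hnd).1

lemma IsRouteTo.ne_nil {R : List V} {x : V} (h : IsRouteTo G R x) : R ≠ [] := by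
  rintro rfl
  exact h.2.1

lemma Perceivable.eq_of_attacker {R : List V} (hP : Perceivable G (some m) d m R) :
    R = [m, d] := by
  obtain ⟨hhead, ⟨-, -, hmR⟩ | ⟨_, R', ⟨⟩, rfl, hroute, -, -⟩⟩ := hP
  · exact absurd (List.mem_of_head? hhead) (hmR m rfl)
  · rw [List.head?_append_of_ne_nil _ hroute.ne_nil] at hhead
    rw [List.eq_singleton_of_head?_of_getLast? hhead hroute.2.2 hroute.1]
    rfl

lemma Perceivable.eq_of_dest {R : List V} (hP : Perceivable G (some m) d d R) : R = [d] := by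
  obtain ⟨hhead, ⟨hroute, -, -⟩ | ⟨_, R', -, rfl, hroute, hdR', -⟩⟩ := hP
  · exact List.eq_singleton_of_head?_of_getLast? hhead hroute.2.2 hroute.1
  · rw [List.head?_append_of_ne_nil _ hroute.ne_nil] at hhead
    exact absurd (List.mem_of_head? hhead) hdR'

lemma ExportOK.cons_cons {s n : V} {t : List V} (h : ExportOK G (n :: t))
    (hexp : exportsTo G n s (n :: t)) : ExportOK G (s :: n :: t) := by
  cases t with
  | nil => trivial
  | cons c t => exact ⟨hexp, h⟩

lemma Perceivable.cons {s n : V} {P : List V} (hP : Perceivable G (some m) d n P)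
    (hadj : G.adj s n = true) (hsm : s ≠ m) (hsP : s ∉ P) (hexp : exportsTo G n s P) :
    Perceivable G (some m) d s (s :: P) := by
  obtain ⟨hhead, ⟨⟨hnd, hpath, hlast⟩, hex, hmP⟩ | ⟨_, R', ⟨⟩, rfl, hroute, hdR', hex⟩⟩ := hP
  · obtain ⟨t, rfl⟩ := List.head?_eq_some_iff.mp hhead
    refine ⟨rfl, Or.inl ⟨⟨List.nodup_cons.mpr ⟨hsP, hnd⟩, ⟨hadj, hpath⟩, ?_⟩, hex.cons_cons hexp, ?_⟩⟩
    · rwa [List.getLast?_cons_cons]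
    · rintro _ ⟨⟩
      simpa [Ne.symm hsm] using hmP m rfl
  · rw [List.head?_append_of_ne_nil _ hroute.ne_nil] at hhead
    obtain ⟨t, rfl⟩ := List.head?_eq_some_iff.mp hhead
    obtain ⟨hnd, hpath, hlast⟩ := hroute
    have hsd : s ≠ d := by rintro rfl; simp at hsP
    refine ⟨rfl, Or.inr ⟨m, s :: n :: t, rfl, rfl, ⟨?_, ⟨hadj, hpath⟩, ?_⟩, ?_, hex.cons_cons ?_⟩⟩
    · exact List.nodup_cons.mpr ⟨fun h => hsP (List.mem_append_left _ h), hnd⟩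
    · rwa [List.getLast?_cons_cons]
    · simpa [Ne.symm hsd] using hdR'
    · cases t <;> simp_all [exportsTo]

lemma perceivable_bogus {s : V} (hmd : m ≠ d) (hadj : G.adj s m = true) (hsm : s ≠ m)
    (hsd : s ≠ d) : Perceivable G (some m) d s [s, m, d] :=
  ⟨rfl, Or.inr ⟨m, [s, m], rfl, rfl, ⟨by simp [hsm], ⟨hadj, trivial⟩, rfl⟩,
    by simp [hmd.symm, Ne.symm hsd], trivial⟩⟩

lemma Perceivable.adj_and_not_mem {v u : V} {Q : List V} (hvm : v ≠ m)
    (hP : Perceivable G (some m) d v (v :: u :: Q)) : G.adj v u = true ∧ v ∉ u :: Q := by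
  obtain ⟨-, ⟨⟨hnd, hpath, -⟩, -, -⟩ | ⟨_, R', ⟨⟩, hR, ⟨hnd, hpath, hlast⟩, hdR', -⟩⟩ := hP
  · exact ⟨hpath.1, (List.nodup_cons.mp hnd).1⟩
  match R', hR with
  | [_], hR =>
    simp only [List.cons_append, List.nil_append, List.cons.injEq] at hR
    simp_all
  | _ :: _ :: t, hR =>
    simp only [List.cons_append, List.cons.injEq] at hR
    obtain ⟨rfl, rfl, rfl⟩ := hR
    have hvd : v ≠ d := by rintro rfl; simp at hdR'
    refine ⟨hpath.1, ?_⟩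
    simpa [hvd] using (List.nodup_cons.mp hnd).1

lemma Perceivable.exportsTo_tail {v u : V} {Q : List V} (hum : u ≠ m)
    (hP : Perceivable G (some m) d v (v :: u :: Q)) : exportsTo G u v (u :: Q) := by
  cases Q with
  | nil => trivial
  | cons c Q =>
    obtain ⟨-, ⟨-, hex, -⟩ | ⟨_, R', ⟨⟩, hR, ⟨-, -, hlast⟩, -, hex⟩⟩ := hP
    · exact hex.1
    match R', hR with
    | [_, _], hR =>
      simp only [List.cons_append, List.nil_append, List.cons.injEq] at hR
      simp_all
    | _ :: _ :: _ :: _, hR =>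
      simp only [List.cons_append, List.cons.injEq] at hR
      obtain ⟨rfl, rfl, rfl, -⟩ := hR
      exact hex.1

end Routes

lemma FCRStage.eq_of_attacker {V : Type*} [Fintype V] {G : ASGraph V} {tb : V → List V → ℕ}
    {S : Finset V} {m d : V} (hmd : m ≠ d) {r : ℕ} {R : List V}
    (h : FCRStage G tb S (some m) d r m R) : R = [m, d] := by
  induction r generalizing R with
  | zero =>
    obtain ⟨hmd', -⟩ | ⟨_, ⟨⟩, -, hR⟩ := h
    exacts [absurd hmd' hmd, hR]
  | succ r ih =>
    obtain h | ⟨hP, -⟩ := h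
    exacts [ih h, hP.eq_of_attacker]

namespace Stable

variable {V : Type*} [Fintype V] {G : ASGraph V} {tb : V → List V → ℕ} {S : Finset V} {m d : V}
  {σ : V → List V} {s : V}

local notation "rank" => rankNat G S (some m) SecModel.third

lemma sel_attacker (hσ : Stable G tb S (some m) d SecModel.third σ) : σ m = [] :=
  hσ.2.1 m rfl

lemma sel_ne_nil (hσ : Stable G tb S (some m) d SecModel.third σ) (hsd : s ≠ d) (hsm : s ≠ m)
    {R : List V} (hR : Avail G (some m) d σ s R) : σ s ≠ [] := by
  obtain ⟨-, hnone⟩ | ⟨hsel, -⟩ := hσ.2.2 s hsd (by rintro _ ⟨⟩; exact hsm)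
  · exact absurd hR (hnone R)
  · rcases hsel with ⟨_, -, -, -, -, -, -, h⟩ | ⟨_, -, -, -, h⟩ <;> simp [h]

lemma avail_sel (hσ : Stable G tb S (some m) d SecModel.third σ) (hsd : s ≠ d) (hsm : s ≠ m)
    (hne : σ s ≠ []) : Avail G (some m) d σ s (σ s) := by
  obtain ⟨hnil, -⟩ | ⟨hsel, -⟩ := hσ.2.2 s hsd (by rintro _ ⟨⟩; exact hsm)
  exacts [absurd hnil hne, hsel]

lemma sel_preferred (hσ : Stable G tb S (some m) d SecModel.third σ) (hsd : s ≠ d) (hsm : s ≠ m)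
    {R : List V} (hR : Avail G (some m) d σ s R) (hRσ : R ≠ σ s) :
    rank (σ s) < rank R ∨ (rank (σ s) = rank R ∧ tb s (σ s) < tb s R) := by
  obtain ⟨-, hnone⟩ | ⟨-, hbest⟩ := hσ.2.2 s hsd (by rintro _ ⟨⟩; exact hsm)
  exacts [absurd hR (hnone R), hbest R hR hRσ]

lemma sel_cases (hσ : Stable G tb S (some m) d SecModel.third σ) (hne : σ s ≠ []) :
    (s = d ∧ σ s = [d]) ∨
    (s ≠ d ∧ s ≠ m ∧
      ((∃ n, G.adj s n = true ∧ σ n ≠ [] ∧ s ∉ σ n ∧ exportsTo G n s (σ n) ∧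
          σ s = s :: σ n) ∨
       (G.adj s m = true ∧ σ s = [s, m, d]))) := by
  by_cases hsd : s = d
  · exact Or.inl ⟨hsd, hsd ▸ hσ.1⟩
  have hsm : s ≠ m := by rintro rfl; exact hne hσ.sel_attacker
  refine Or.inr ⟨hsd, hsm, ?_⟩
  obtain ⟨n, hadj, -, hnne, -, h⟩ | ⟨_, ⟨⟩, hadj, -, h⟩ := hσ.avail_sel hsd hsm hne
  exacts [Or.inl ⟨n, hadj, hnne, h⟩, Or.inr ⟨hadj, h⟩]

lemma perceivable_sel (hσ : Stable G tb S (some m) d SecModel.third σ) (hmd : m ≠ d) (s : V)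
    (hne : σ s ≠ []) : Perceivable G (some m) d s (σ s) := by
  induction hlen : (σ s).length using Nat.strong_induction_on generalizing s with
  | _ k ih =>
    obtain ⟨rfl, h⟩ | ⟨hsd, hsm, ⟨n, hadj, hnne, hsn, hexp, h⟩ | ⟨hadj, h⟩⟩ :=
      hσ.sel_cases hne <;> rw [h]
    · exact ⟨rfl, Or.inl ⟨⟨List.nodup_singleton _, trivial, rfl⟩, trivial, by simpa using hmd⟩⟩
    · have hn := ih _ (by simp [← hlen, h]) n hnne rfl
      exact hn.cons hadj hsm hsn hexp
    · exact perceivable_bogus hmd hadj hsm hsd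

lemma sel_suffix (hσ : Stable G tb S (some m) d SecModel.third σ) {A Q : List V} {u : V}
    (h : σ s = A ++ u :: Q) : (u = m ∧ Q = [d]) ∨ σ u = u :: Q := by
  induction A generalizing s with
  | nil =>
    obtain ⟨rfl, h'⟩ | ⟨-, -, ⟨_, -, -, -, -, h'⟩ | ⟨-, h'⟩⟩ :=
      hσ.sel_cases (s := s) (by simp [h]) <;>
    · rw [h'] at h
      obtain ⟨rfl, rfl⟩ := List.cons.inj h
      exact Or.inr h'
  | cons a A ih =>
    obtain ⟨rfl, h'⟩ | ⟨-, -, ⟨n, -, -, -, -, h'⟩ | ⟨-, h'⟩⟩ :=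
      hσ.sel_cases (s := s) (by simp [h]) <;> rw [h'] at h
    · simp at h
    · exact ih (List.cons.inj h).2
    · match A, h with
      | [], h => simp_all
      | [_], h =>
        simp only [List.cons_append, List.nil_append, List.cons.injEq] at h
        obtain ⟨-, -, rfl, rfl⟩ := h
        exact Or.inr hσ.1
      | _ :: _ :: _, h => simp at h

lemma consistentWith_sel (hσ : Stable G tb S (some m) d SecModel.third σ)
    {Fix : V → List V → Prop} (hFix : ∀ u Q, Fix u Q → u ≠ m → σ u = Q)
    (hFixm : ∀ Q, Fix m Q → Q = [m, d]) : ConsistentWith Fix (σ s) := by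
  intro A u Q h Q' hfix
  rcases hσ.sel_suffix h with ⟨rfl, rfl⟩ | hu
  · exact hFixm Q' hfix
  · have hum : u ≠ m := by rintro rfl; simp [hσ.sel_attacker] at hu
    exact (hFix u Q' hfix hum).symm.trans hu

end Stable

lemma avail_of_perceivable {V : Type*} {G : ASGraph V} {m d : V} {σ : V → List V} {v u : V}
    {Q : List V} (hvm : v ≠ m) (hvd : v ≠ d) (hP : Perceivable G (some m) d v (v :: u :: Q))
    (hu : (u ≠ m ∧ σ u = u :: Q) ∨ (u = m ∧ Q = [d])) :
    Avail G (some m) d σ v (v :: u :: Q) := by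
  obtain ⟨hadj, hvQ⟩ := hP.adj_and_not_mem hvm
  obtain ⟨hum, hσu⟩ | ⟨rfl, rfl⟩ := hu
  · exact Or.inl ⟨u, hadj, by rintro _ ⟨⟩; exact hum, by simp [hσu], by simp [hσu],
      hσu ▸ hvQ, hσu ▸ hP.exportsTo_tail hum, by rw [hσu]⟩
  · exact Or.inr ⟨u, rfl, hadj, hvd, rfl⟩

theorem FCR_correct_general {V : Type*} [Fintype V]
    (G : ASGraph V) (tb : V → List V → ℕ)
    (S : Finset V) (m d : V) (hmd : m ≠ d)
    (σ : V → List V) (hσ : Stable G tb S (some m) d SecModel.third σ) :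
    ∀ (r : ℕ) (v : V) (R : List V),
      FCRStage G tb S (some m) d r v R → v ≠ m → σ v = R := by
  intro r
  induction r with
  | zero =>
    rintro v R (⟨rfl, rfl⟩ | ⟨_, ⟨⟩, rfl, -⟩) hvm
    exacts [hσ.1, absurd rfl hvm]
  | succ r ih =>
    rintro v R (hold | ⟨hP, -, ⟨u, Q, rfl, hfixu⟩, -, hbest⟩) hvm
    · exact ih v R hold hvm
    have hvd : v ≠ d := by rintro rfl; simpa using hP.eq_of_dest
    have hu : (u ≠ m ∧ σ u = u :: Q) ∨ (u = m ∧ Q = [d]) := by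
      by_cases hum : u = m
      · subst hum; simpa using FCRStage.eq_of_attacker hmd hfixu
      · exact Or.inl ⟨hum, ih u _ hfixu hum⟩
    have havail := avail_of_perceivable hvm hvd hP hu
    by_contra hne
    have hσv := hσ.sel_ne_nil hvd hvm havail
    obtain ⟨hle, htb⟩ := hbest (σ v) (hσ.perceivable_sel hmd v hσv)
      (hσ.consistentWith_sel ih (fun _ => FCRStage.eq_of_attacker hmd))
    rcases hσ.sel_preferred hvd hvm havail (Ne.symm hne) with hlt | ⟨heq, hlt⟩
    · omega
    · exact absurd (htb heq.symm hne) (by omega)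

/-- **Correctness of the FCR phase of the route-fixing algorithm (security
third model).**  Every AS whose route is fixed during the
Fix-Customer-Routes phase stabilizes, in the S*BGP routing outcome, to exactly
the route computed by the algorithm. -/
theorem FCR_correct {V : Type*} [Fintype V] [DecidableEq V]
    (G : ASGraph V) (tb : V → List V → ℕ) (hinj : InjTB tb)
    (S : Finset V) (m d : V) (hmd : m ≠ d)
    (σ : V → List V) (hσ : Stable G tb S (some m) d SecModel.third σ) :
    ∀ (r : ℕ) (v : V) (R : List V),
      FCRStage G tb S (some m) d r v R → v ≠ m → σ v = R :=
  FCR_correct_general G tb S m d hmd σ hσ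

end SBGP
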